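/- Let A, B : [0,1] → ℝ be continuous and suppose the Abel equation x' = A(t)x³ + B(t)x² has a center at x = 0. Then ∫₀¹ B(t) dt = 0, ∫₀¹ A(t) dt = 0, and ∫₀¹ A(t)(∫₀ᵗ B(s) ds) dt = 0. -/

import Mathlib

/-!
Along a solution `g` with `g 0 = ρ`, the substitution `y = 1 / g` linearises the equation:
`1 / g = 1 / ρ - H` with `H t = ∫₀ᵗ (b + a g)`, so periodicity forces `H 1 = 0`, i.e.
`∫₀¹ b = -∫₀¹ a g`. For small `ρ > 0` a continuity argument gives `|g| ≤ 2ρ` on `[0,1]`, and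
expanding `g = ρ + ρ g H` to second order turns `H 1 = 0` into
`∫₀¹ b + ρ ∫₀¹ a + ρ² ∫₀¹ a(t) ∫₀ᵗ b = O(ρ³)`. Since this holds for every small `ρ > 0`, the three
coefficients vanish.
-/

/-- `γ : ℝ → ℝ` is a solution of the Abel equation `x' = A(t)x³ + B(t)x²` on `[0,1]`. -/
def IsAbelSolution (A B : ℝ → ℝ) (γ : ℝ → ℝ) : Prop :=
  ∀ t ∈ Set.Icc (0:ℝ) 1,
    HasDerivWithinAt γ (A t * γ t ^ 3 + B t * γ t ^ 2) (Set.Icc (0:ℝ) 1) t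

/-- The Abel equation has a center at `x = 0`: all solutions starting close enough
to `0` are defined on all of `[0,1]` and are periodic orbits. -/
def HasCenterAtZero (A B : ℝ → ℝ) : Prop :=
  ∃ ε > (0:ℝ), ∀ ρ : ℝ, |ρ| < ε →
    ∃ γ : ℝ → ℝ, IsAbelSolution A B γ ∧ γ 0 = ρ ∧ γ 0 = γ 1

open Set Filter Topology intervalIntegral

lemma ContinuousOn.exists_continuous_eqOn_Icc {α β : Type*} [LinearOrder α] [TopologicalSpace α]
    [OrderTopology α] [TopologicalSpace β] {f : α → β} {a b : α} (hab : a ≤ b)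
    (hf : ContinuousOn f (Icc a b)) : ∃ g : α → β, Continuous g ∧ EqOn g f (Icc a b) :=
  ⟨IccExtend hab ((Icc a b).domRestrict f), hf.domRestrict.Icc_extend',
    fun _ hx => IccExtend_of_mem hab _ hx⟩

lemma IsAbelSolution.continuousOn {A B γ : ℝ → ℝ} (h : IsAbelSolution A B γ) :
    ContinuousOn γ (Icc 0 1) :=
  fun t ht => (h t ht).continuousWithinAt

lemma IsAbelSolution.congr {A B γ a b g : ℝ → ℝ} (h : IsAbelSolution A B γ)
    (ha : EqOn a A (Icc 0 1)) (hb : EqOn b B (Icc 0 1)) (hg : EqOn g γ (Icc 0 1)) :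
    IsAbelSolution a b g := by
  intro t ht
  rw [ha ht, hb ht, hg ht]
  exact (h t ht).congr hg (hg ht)

lemma ContinuousOn.forall_abs_lt_of_bootstrap {f : ℝ → ℝ} {a b K : ℝ}
    (hf : ContinuousOn f (Icc a b)) (ha : |f a| < K)
    (h : ∀ τ ∈ Icc a b, (∀ s ∈ Icc a τ, |f s| ≤ K) → |f τ| < K) :
    ∀ t ∈ Icc a b, |f t| < K := by
  by_contra! hexit
  obtain ⟨t, ht, hKt⟩ := hexit
  set T := Icc a b ∩ (fun s => |f s|) ⁻¹' Ici K
  have hTbdd : BddBelow T := ⟨a, fun s hs => hs.1.1⟩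
  have hτ : sInf T ∈ T :=
    (hf.abs.preimage_isClosed_of_isClosed isClosed_Icc isClosed_Ici).csInf_mem ⟨t, ht, hKt⟩ hTbdd
  set τ := sInf T
  have hbefore : ∀ s ∈ Ico a τ, |f s| ≤ K := fun s hs => le_of_lt <| not_le.1 fun hKs =>
    hs.2.not_ge (csInf_le hTbdd ⟨⟨hs.1, hs.2.le.trans hτ.1.2⟩, hKs⟩)
  have hupto : ∀ s ∈ Icc a τ, |f s| ≤ K := by
    rcases hτ.1.1.eq_or_lt with hτa | hτa
    · intro s hs
      rw [show s = a from le_antisymm (hs.2.trans hτa.ge) hs.1]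
      exact ha.le
    · rw [← closure_Ico hτa.ne]
      refine le_on_closure hbefore (hf.abs.mono ?_) continuousOn_const
      rw [closure_Ico hτa.ne]
      exact Icc_subset_Icc_right hτ.1.2
  exact (h τ hτ.1 hupto).not_ge hτ.2

lemma abs_intervalIntegral_le_of_forall_abs_le {f : ℝ → ℝ} {C τ : ℝ} (hτ : τ ∈ Icc (0:ℝ) 1)
    (hC : 0 ≤ C) (hf : ∀ s ∈ Icc 0 τ, |f s| ≤ C) : |∫ s in (0:ℝ)..τ, f s| ≤ C := by
  have hbound := norm_integral_le_of_norm_le_const (f := f) (a := 0) (b := τ) (C := C)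
    fun s hs => hf s (Ioc_subset_Icc_self (uIoc_of_le hτ.1 ▸ hs))
  rw [Real.norm_eq_abs, sub_zero, abs_of_nonneg hτ.1] at hbound
  nlinarith [hτ.2]

lemma eq_zero_of_abs_pow_mul_le {f : ℝ → ℝ} {C δ : ℝ} {k n : ℕ} (hkn : k < n)
    (hf : ContinuousAt f 0) (hδ : 0 < δ) (h : ∀ ρ ∈ Ioo 0 δ, |ρ ^ k * f ρ| ≤ C * ρ ^ n) :
    f 0 = 0 := by
  have hbound : ∀ ρ ∈ Ioo 0 δ, ‖f ρ‖ ≤ C * ρ ^ (n - k) := fun ρ hρ => by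
    have hρk : 0 < ρ ^ k := pow_pos hρ.1 k
    have := h ρ hρ
    rw [abs_mul, abs_of_pos hρk, ← Nat.add_sub_cancel' hkn.le, pow_add,
      mul_left_comm] at this
    exact le_of_mul_le_mul_left this hρk
  have hvanish : Tendsto (fun ρ : ℝ => C * ρ ^ (n - k)) (𝓝[>] 0) (𝓝 0) :=
    tendsto_nhdsWithin_of_tendsto_nhds <| by
      simpa [zero_pow (Nat.sub_ne_zero_of_lt hkn)] using
        (show Continuous fun ρ : ℝ => C * ρ ^ (n - k) by fun_prop).tendsto 0
  exact tendsto_nhds_unique (hf.tendsto.mono_left nhdsWithin_le_nhds)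
    (squeeze_zero_norm' (mem_of_superset (Ioo_mem_nhdsGT hδ) hbound) hvanish)

lemma coeffs_eq_zero_of_abs_le_mul_pow_three {c₀ c₁ c₂ C δ : ℝ} (hδ : 0 < δ)
    (h : ∀ ρ ∈ Ioo 0 δ, |c₀ + c₁ * ρ + c₂ * ρ ^ 2| ≤ C * ρ ^ 3) :
    c₀ = 0 ∧ c₁ = 0 ∧ c₂ = 0 := by
  have hc₀ : c₀ = 0 := by
    have := eq_zero_of_abs_pow_mul_le (f := fun ρ => c₀ + c₁ * ρ + c₂ * ρ ^ 2) (k := 0) (n := 3)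
      (by norm_num) (by fun_prop) hδ fun ρ hρ => by simpa using h ρ hρ
    simpa using this
  have hc₁ : c₁ = 0 := by
    simpa using eq_zero_of_abs_pow_mul_le (f := fun ρ => c₁ + c₂ * ρ) (k := 1) (n := 3)
      (by norm_num) (by fun_prop) hδ fun ρ hρ => by
        convert h ρ hρ using 3
        rw [hc₀]
        ring
  have hc₂ : c₂ = 0 :=
    eq_zero_of_abs_pow_mul_le (f := fun _ => c₂) (k := 2) (n := 3) (by norm_num)
      continuousAt_const hδ fun ρ hρ => by
        convert h ρ hρ using 3
        rw [hc₀, hc₁]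
        ring
  exact ⟨hc₀, hc₁, hc₂⟩

/-- Along a solution `g` of `x' = a x³ + b x²` with `g 0 = ρ`, one has
`1 / g = 1 / ρ - abelDrift a b g`, since `(1 / x)' = -(a x + b)`. -/
noncomputable def abelDrift (a b g : ℝ → ℝ) (t : ℝ) : ℝ := ∫ s in (0:ℝ)..t, (b s + a s * g s)

lemma hasDerivAt_abelDrift {a b g : ℝ → ℝ} (ha : Continuous a) (hb : Continuous b)
    (hg : Continuous g) (t : ℝ) : HasDerivAt (abelDrift a b g) (b t + a t * g t) t :=
  (show Continuous fun s => b s + a s * g s by fun_prop).integral_hasStrictDerivAt 0 t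
    |>.hasDerivAt

lemma continuous_abelDrift {a b g : ℝ → ℝ} (ha : Continuous a) (hb : Continuous b)
    (hg : Continuous g) : Continuous (abelDrift a b g) :=
  continuous_iff_continuousAt.2 fun t => (hasDerivAt_abelDrift ha hb hg t).continuousAt

lemma IsAbelSolution.mul_one_sub_abelDrift {a b g : ℝ → ℝ} {ρ : ℝ} (ha : Continuous a)
    (hb : Continuous b) (hg : Continuous g) (hsol : IsAbelSolution a b g) (h0 : g 0 = ρ) :
    ∀ t ∈ Icc (0:ℝ) 1, g t * (1 - ρ * abelDrift a b g t) = ρ := by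
  -- `G` solves the linear equation `G' = (a g + b) g G` with `G 0 = 0`, so no division by `g`
  -- (which might vanish a priori) is needed.
  set G : ℝ → ℝ := fun t => g t * (1 - ρ * abelDrift a b g t) - ρ
  set c : ℝ → ℝ := fun t => (a t * g t + b t) * g t
  have hG' : ∀ t ∈ Icc (0:ℝ) 1, HasDerivWithinAt G (c t * G t) (Icc 0 1) t := fun t ht => by
    have hd : HasDerivWithinAt G ((a t * g t ^ 3 + b t * g t ^ 2) * (1 - ρ * abelDrift a b g t)
        + g t * -(ρ * (b t + a t * g t))) (Icc 0 1) t :=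
      ((hsol t ht).mul (((hasDerivAt_abelDrift ha hb hg t).hasDerivWithinAt.const_mul
        ρ).const_sub 1)).sub_const ρ
    convert hd using 1
    ring
  obtain ⟨K, hK⟩ := isCompact_Icc.exists_bound_of_continuousOn (f := c)
    (by fun_prop : Continuous c).continuousOn
  have hGzero := eq_zero_of_abs_deriv_le_mul_abs_self_of_eq_zero_right (K := K)
    (fun t ht => (hG' t ht).continuousWithinAt)
    (fun t ht =>
      (hG' t (Ico_subset_Icc_self ht)).mono_of_mem_nhdsWithin (Icc_mem_nhdsGE_of_mem ht))
    (by simp [G, abelDrift, h0])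
    fun t ht => by
      rw [norm_mul]
      exact mul_le_mul_of_nonneg_right (hK t (Ico_subset_Icc_self ht)) (norm_nonneg _)
  exact fun t ht => sub_eq_zero.1 (hGzero t ht)

lemma abs_abelDrift_le {a b g : ℝ → ℝ} {M ρ τ : ℝ} (hM : 0 ≤ M)
    (haM : ∀ t ∈ Icc (0:ℝ) 1, |a t| ≤ M) (hbM : ∀ t ∈ Icc (0:ℝ) 1, |b t| ≤ M) (hρ : 2 * ρ ≤ 1)
    (hτ : τ ∈ Icc (0:ℝ) 1) (hg : ∀ s ∈ Icc 0 τ, |g s| ≤ 2 * ρ) :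
    |abelDrift a b g τ| ≤ 2 * M := by
  refine abs_intervalIntegral_le_of_forall_abs_le hτ (by positivity) fun s hs => ?_
  have hs₁ : s ∈ Icc (0:ℝ) 1 := ⟨hs.1, hs.2.trans hτ.2⟩
  have hag : |a s| * |g s| ≤ M * (2 * ρ) :=
    mul_le_mul (haM s hs₁) (hg s hs) (abs_nonneg _) hM
  calc |b s + a s * g s| ≤ |b s| + |a s| * |g s| := by rw [← abs_mul]; exact abs_add_le _ _
    _ ≤ 2 * M := by nlinarith [hbM s hs₁]

lemma abs_le_two_mul_of_mul_one_sub_abelDrift_eq {a b g : ℝ → ℝ} {M ρ : ℝ}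
    (hg : Continuous g) (hM : 1 ≤ M) (haM : ∀ t ∈ Icc (0:ℝ) 1, |a t| ≤ M)
    (hbM : ∀ t ∈ Icc (0:ℝ) 1, |b t| ≤ M) (hρ : 0 < ρ) (hρM : 8 * M * ρ ≤ 1)
    (hrel : ∀ t ∈ Icc (0:ℝ) 1, g t * (1 - ρ * abelDrift a b g t) = ρ) :
    ∀ t ∈ Icc (0:ℝ) 1, |g t| ≤ 2 * ρ := by
  have h0 : g 0 = ρ := by simpa [abelDrift] using hrel 0 (left_mem_Icc.2 zero_le_one)
  refine fun t ht => le_of_lt <| hg.continuousOn.forall_abs_lt_of_bootstrap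
    (by rw [h0, abs_of_pos hρ]; linarith) (fun τ hτ hgτ => ?_) t ht
  have hH := abs_abelDrift_le (by linarith) haM hbM (by nlinarith) hτ hgτ
  have hρH : |ρ * abelDrift a b g τ| ≤ 1 / 4 := by
    rw [abs_mul, abs_of_pos hρ]
    nlinarith
  have hfactor : 3 / 4 ≤ |1 - ρ * abelDrift a b g τ| := by
    have := abs_sub_abs_le_abs_sub 1 (ρ * abelDrift a b g τ)
    rw [abs_one] at this
    linarith
  have hprod : |g τ| * |1 - ρ * abelDrift a b g τ| = ρ := by
    rw [← abs_mul, hrel τ hτ, abs_of_pos hρ]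
  nlinarith [abs_nonneg (g τ)]

lemma IsAbelSolution.integral_expansion {a b g : ℝ → ℝ} {ρ : ℝ} (ha : Continuous a)
    (hb : Continuous b) (hg : Continuous g) (hρ : ρ ≠ 0) (hsol : IsAbelSolution a b g)
    (h0 : g 0 = ρ) (hper : g 0 = g 1) :
    (∫ t in (0:ℝ)..1, b t) + (∫ t in (0:ℝ)..1, a t) * ρ
        + (∫ t in (0:ℝ)..1, a t * ∫ s in (0:ℝ)..t, b s) * ρ ^ 2
      = -(ρ ^ 2 * ∫ t in (0:ℝ)..1,
          a t * ((∫ s in (0:ℝ)..t, a s * g s) + g t * abelDrift a b g t ^ 2)) := by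
  set H := abelDrift a b g
  set B₀ : ℝ → ℝ := fun t => ∫ s in (0:ℝ)..t, b s
  set K : ℝ → ℝ := fun t => ∫ s in (0:ℝ)..t, a s * g s
  have hrel := hsol.mul_one_sub_abelDrift ha hb hg h0
  have hH1 : H 1 = 0 := by
    have h1 := hrel 1 (right_mem_Icc.2 zero_le_one)
    rw [← hper, h0] at h1
    have : ρ ^ 2 * H 1 = 0 := by linear_combination -h1
    exact (mul_eq_zero.1 this).resolve_left (pow_ne_zero 2 hρ)
  have hHsplit : ∀ t, H t = B₀ t + K t := fun t =>
    integral_add (hb.intervalIntegrable _ _) ((ha.mul hg).intervalIntegrable _ _)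
  -- Iterating `g = ρ + ρ g H` once gives `g = ρ + ρ² H + ρ² g H²`, and `H = B₀ + K`.
  have hpt : ∀ t ∈ uIcc (0:ℝ) 1, b t + a t * ρ + a t * B₀ t * ρ ^ 2
      = (b t + a t * g t) - ρ ^ 2 * (a t * (K t + g t * H t ^ 2)) := fun t ht => by
    rw [uIcc_of_le zero_le_one] at ht
    linear_combination (-a t * (1 + ρ * H t)) * hrel t ht - a t * ρ ^ 2 * hHsplit t
  have hB₀ : Continuous B₀ := continuous_primitive (fun _ _ => hb.intervalIntegrable _ _) 0
  have hK : Continuous K := continuous_primitive (fun _ _ => (ha.mul hg).intervalIntegrable _ _) 0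
  have hH : Continuous H := continuous_abelDrift ha hb hg
  calc _ = ∫ t in (0:ℝ)..1, (b t + a t * ρ + a t * B₀ t * ρ ^ 2) := by
        rw [integral_add, integral_add, integral_mul_const, integral_mul_const] <;>
          exact Continuous.intervalIntegrable (by fun_prop) _ _
    _ = ∫ t in (0:ℝ)..1, ((b t + a t * g t) - ρ ^ 2 * (a t * (K t + g t * H t ^ 2))) :=
        integral_congr hpt
    _ = H 1 - ρ ^ 2 * ∫ t in (0:ℝ)..1, a t * (K t + g t * H t ^ 2) := by
        rw [integral_sub, integral_const_mul]
        · rfl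
        all_goals exact Continuous.intervalIntegrable (by fun_prop) _ _
    _ = _ := by rw [hH1]; ring

lemma IsAbelSolution.abs_expansion_le {a b g : ℝ → ℝ} {M ρ : ℝ} (ha : Continuous a)
    (hb : Continuous b) (hg : Continuous g) (hM : 1 ≤ M) (haM : ∀ t ∈ Icc (0:ℝ) 1, |a t| ≤ M)
    (hbM : ∀ t ∈ Icc (0:ℝ) 1, |b t| ≤ M) (hρ : 0 < ρ) (hρM : 8 * M * ρ ≤ 1)
    (hsol : IsAbelSolution a b g) (h0 : g 0 = ρ) (hper : g 0 = g 1) :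
    |(∫ t in (0:ℝ)..1, b t) + (∫ t in (0:ℝ)..1, a t) * ρ
        + (∫ t in (0:ℝ)..1, a t * ∫ s in (0:ℝ)..t, b s) * ρ ^ 2|
      ≤ (2 * M ^ 2 + 8 * M ^ 3) * ρ ^ 3 := by
  set H := abelDrift a b g
  set K : ℝ → ℝ := fun t => ∫ s in (0:ℝ)..t, a s * g s
  have hgρ := abs_le_two_mul_of_mul_one_sub_abelDrift_eq hg hM haM hbM hρ hρM
    (hsol.mul_one_sub_abelDrift ha hb hg h0)
  have hHM : ∀ t ∈ Icc (0:ℝ) 1, |H t| ≤ 2 * M := fun t ht =>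
    abs_abelDrift_le (by linarith) haM hbM (by nlinarith) ht
      fun s hs => hgρ s ⟨hs.1, hs.2.trans ht.2⟩
  have hKM : ∀ t ∈ Icc (0:ℝ) 1, |K t| ≤ 2 * M * ρ := fun t ht =>
    abs_intervalIntegral_le_of_forall_abs_le ht (by positivity) fun s hs => by
      have hs₁ : s ∈ Icc (0:ℝ) 1 := ⟨hs.1, hs.2.trans ht.2⟩
      rw [abs_mul]
      nlinarith [mul_le_mul (haM s hs₁) (hgρ s hs₁) (abs_nonneg _) (by linarith)]
  have hremainder : |∫ t in (0:ℝ)..1, a t * (K t + g t * H t ^ 2)|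
      ≤ (2 * M ^ 2 + 8 * M ^ 3) * ρ :=
    abs_intervalIntegral_le_of_forall_abs_le (right_mem_Icc.2 zero_le_one) (by positivity)
      fun t ht => by
        have hH2 : |H t| ^ 2 ≤ (2 * M) ^ 2 := pow_le_pow_left₀ (abs_nonneg _) (hHM t ht) 2
        have hgH : |g t| * |H t| ^ 2 ≤ 2 * ρ * (2 * M) ^ 2 :=
          mul_le_mul (hgρ t ht) hH2 (by positivity) (by positivity)
        calc |a t * (K t + g t * H t ^ 2)| ≤ |a t| * (|K t| + |g t| * |H t| ^ 2) := by
              rw [abs_mul, ← abs_pow, ← abs_mul (g t)]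
              exact mul_le_mul_of_nonneg_left (abs_add_le _ _) (abs_nonneg _)
          _ ≤ M * (2 * M * ρ + 2 * ρ * (2 * M) ^ 2) :=
              mul_le_mul (haM t ht) (add_le_add (hKM t ht) hgH) (by positivity) (by linarith)
          _ = (2 * M ^ 2 + 8 * M ^ 3) * ρ := by ring
  rw [hsol.integral_expansion ha hb hg hρ.ne' h0 hper, abs_neg, abs_mul,
    abs_of_nonneg (sq_nonneg ρ)]
  calc ρ ^ 2 * |∫ t in (0:ℝ)..1, a t * (K t + g t * H t ^ 2)|
      ≤ ρ ^ 2 * ((2 * M ^ 2 + 8 * M ^ 3) * ρ) := by gcongr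
    _ = (2 * M ^ 2 + 8 * M ^ 3) * ρ ^ 3 := by ring

lemma HasCenterAtZero.congr {A B a b : ℝ → ℝ} (h : HasCenterAtZero A B)
    (ha : EqOn a A (Icc 0 1)) (hb : EqOn b B (Icc 0 1)) : HasCenterAtZero a b := by
  obtain ⟨ε, hε, hperiodic⟩ := h
  refine ⟨ε, hε, fun ρ hρ => ?_⟩
  obtain ⟨γ, hγ, hγ0, hγ1⟩ := hperiodic ρ hρ
  exact ⟨γ, hγ.congr ha hb (eqOn_refl _ _), hγ0, hγ1⟩

lemma HasCenterAtZero.integrals_eq_zero_of_continuous {a b : ℝ → ℝ} (ha : Continuous a)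
    (hb : Continuous b) (hcenter : HasCenterAtZero a b) :
    (∫ t in (0:ℝ)..1, b t) = 0 ∧ (∫ t in (0:ℝ)..1, a t) = 0 ∧
      (∫ t in (0:ℝ)..1, a t * ∫ s in (0:ℝ)..t, b s) = 0 := by
  obtain ⟨Ma, hMa⟩ := isCompact_Icc.exists_bound_of_continuousOn ha.continuousOn
  obtain ⟨Mb, hMb⟩ := isCompact_Icc.exists_bound_of_continuousOn hb.continuousOn
  set M := max 1 (max Ma Mb)
  have hM : 1 ≤ M := le_max_left _ _
  have haM : ∀ t ∈ Icc (0:ℝ) 1, |a t| ≤ M := fun t ht =>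
    (hMa t ht).trans ((le_max_left _ _).trans (le_max_right _ _))
  have hbM : ∀ t ∈ Icc (0:ℝ) 1, |b t| ≤ M := fun t ht =>
    (hMb t ht).trans ((le_max_right _ _).trans (le_max_right _ _))
  obtain ⟨ε, hε, hperiodic⟩ := hcenter
  refine coeffs_eq_zero_of_abs_le_mul_pow_three (C := 2 * M ^ 2 + 8 * M ^ 3)
    (lt_min hε (by positivity : 0 < 1 / (8 * M))) fun ρ hρ => ?_
  obtain ⟨γ, hγ, hγ0, hγ1⟩ :=
    hperiodic ρ ((abs_of_pos hρ.1).trans_lt (hρ.2.trans_le (min_le_left _ _)))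
  obtain ⟨g, hg, hgγ⟩ := hγ.continuousOn.exists_continuous_eqOn_Icc zero_le_one
  have hρM : 8 * M * ρ ≤ 1 := by
    have := hρ.2.trans_le (min_le_right _ _)
    rw [lt_div_iff₀ (by positivity)] at this
    linarith
  refine (hγ.congr (eqOn_refl _ _) (eqOn_refl _ _) hgγ).abs_expansion_le ha hb hg hM haM hbM
    hρ.1 hρM ?_ ?_
  · rw [hgγ (left_mem_Icc.2 zero_le_one), hγ0]
  · rw [hgγ (left_mem_Icc.2 zero_le_one), hgγ (right_mem_Icc.2 zero_le_one), hγ1]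

theorem abel_center_necessary_conditions
    (A B : ℝ → ℝ)
    (hA : ContinuousOn A (Set.Icc 0 1)) (hB : ContinuousOn B (Set.Icc 0 1))
    (hcenter : HasCenterAtZero A B) :
    (∫ t in (0:ℝ)..1, B t) = 0 ∧
    (∫ t in (0:ℝ)..1, A t) = 0 ∧
    (∫ t in (0:ℝ)..1, A t * (∫ s in (0:ℝ)..t, B s)) = 0 := by
  obtain ⟨a, ha, haA⟩ := hA.exists_continuous_eqOn_Icc zero_le_one
  obtain ⟨b, hb, hbB⟩ := hB.exists_continuous_eqOn_Icc zero_le_one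
  obtain ⟨hb0, ha0, hab0⟩ :=
    (hcenter.congr haA hbB).integrals_eq_zero_of_continuous ha hb
  have hunit : uIcc (0:ℝ) 1 = Icc 0 1 := uIcc_of_le zero_le_one
  have hprim : EqOn (fun t => ∫ s in (0:ℝ)..t, b s) (fun t => ∫ s in (0:ℝ)..t, B s) (Icc 0 1) :=
    fun t ht => integral_congr (hbB.mono (uIcc_subset_Icc (left_mem_Icc.2 zero_le_one) ht))
  have hintegrand : EqOn (fun t => a t * ∫ s in (0:ℝ)..t, b s)
      (fun t => A t * ∫ s in (0:ℝ)..t, B s) (uIcc 0 1) :=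
    hunit ▸ fun t ht => by simp only [haA ht, hprim ht]
  refine ⟨?_, ?_, ?_⟩
  · rwa [← integral_congr (hunit ▸ hbB)]
  · rwa [← integral_congr (hunit ▸ haA)]
  · rwa [← integral_congr hintegrand]
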